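/- Consider the regression model: on a probability space, X : Ω → ℝ^d and N : Ω → ℝ are independent random variables with E[N] = 0, E[N²] ≤ σ² for a given σ > 0, E[⟨X,u⟩⁴] ≤ C·(E[⟨X,u⟩²])² for all u ∈ ℝ^d for a given C ≥ 1, and E[⟨X,u⟩²] ≤ 1 for every unit vector u (all stated moments finite); let Y := ⟨X,w*⟩ + N for a fixed w* ∈ ℝ^d. Then for every w ∈ ℝ^d, every κ > 0, and every unit vector u ∈ ℝ^d, E[ ⟨g(X,Y;w,κ), u⟩² ] ≤ σ² + C·E[⟨X, w−w*⟩²], where g(X,Y;w,κ) := κ·((⟨X,w⟩ − Y)/max(|⟨X,w⟩ − Y|, κ))·X; in particular, Var( ⟨g(X,Y;w,κ), u⟩ ) ≤ σ² + C·E[⟨X, w−w*⟩²]. -/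

import Mathlib

open MeasureTheory ProbabilityTheory
open scoped RealInnerProductSpace ENNReal

/-!
Clipping only shrinks the residual `r = ⟨X, w - w*⟩ - N`, so `⟨g, u⟩² ≤ r² ⟨X, u⟩²`.
Expanding `r²`, the cross term vanishes because `N` is centred and independent of `X`, the
noise term factors as `E[N²] E[⟨X, u⟩²] ≤ σ²`, and Cauchy–Schwarz together with the
`L⁴`–`L²` comparison bounds `E[⟨X, w - w*⟩² ⟨X, u⟩²]` by `C E[⟨X, w - w*⟩²] E[⟨X, u⟩²]`.
The variance is at most the second moment.
-/

/-- The clipped (Huber) gradient of the squared loss at parameter `w` with clipping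
parameter `κ`, for a sample `(x, y)`. -/
noncomputable def clipGrad {d : ℕ} (κ : ℝ) (w x : EuclideanSpace ℝ (Fin d)) (y : ℝ) :
    EuclideanSpace ℝ (Fin d) :=
  (κ * ((⟪x, w⟫ - y) / max (|⟪x, w⟫ - y|) κ)) • x

lemma abs_mul_div_max_abs_le {κ : ℝ} (hκ : 0 < κ) (r : ℝ) : |κ * (r / max |r| κ)| ≤ |r| := by
  have hm : 0 < max |r| κ := lt_max_of_lt_right hκ
  rw [abs_mul, abs_div, abs_of_pos hκ, abs_of_pos hm, mul_div_assoc', div_le_iff₀ hm]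
  exact mul_comm κ |r| ▸ mul_le_mul_of_nonneg_left (le_max_right _ _) (abs_nonneg r)

lemma inner_clipGrad {d : ℕ} (κ : ℝ) (w x u : EuclideanSpace ℝ (Fin d)) (y : ℝ) :
    ⟪clipGrad κ w x y, u⟫ = κ * ((⟪x, w⟫ - y) / max (|⟪x, w⟫ - y|) κ) * ⟪x, u⟫ :=
  real_inner_smul_left _ _ _

lemma inner_clipGrad_sq_le {d : ℕ} {κ : ℝ} (hκ : 0 < κ) (w x u : EuclideanSpace ℝ (Fin d))
    (y : ℝ) : ⟪clipGrad κ w x y, u⟫ ^ 2 ≤ (⟪x, w⟫ - y) ^ 2 * ⟪x, u⟫ ^ 2 := by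
  rw [inner_clipGrad, mul_pow, ← sq_abs (κ * _), ← sq_abs (⟪x, w⟫ - y)]
  exact mul_le_mul_of_nonneg_right
    (pow_le_pow_left₀ (abs_nonneg _) (abs_mul_div_max_abs_le hκ _) 2) (sq_nonneg _)

instance : ENNReal.HolderTriple 4 4 2 := ⟨by
  rw [← two_mul, show (4 : ℝ≥0∞) = 2 * 2 by norm_num, ENNReal.mul_inv (by simp) (by simp),
    ← mul_assoc, ENNReal.mul_inv_cancel (by simp) (by simp), one_mul]⟩

section Moments

variable {Ω : Type*} [MeasurableSpace Ω] {μ : Measure Ω} {f g : Ω → ℝ}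

lemma MeasureTheory.MemLp.sq_of_four (hf : MemLp f 4 μ) : MemLp (fun ω => f ω ^ 2) 2 μ := by
  simpa only [sq] using hf.mul' hf

lemma integral_sq_mul_sq_le_sqrt_mul_sqrt (hf : MemLp f 4 μ) (hg : MemLp g 4 μ) :
    ∫ ω, f ω ^ 2 * g ω ^ 2 ∂μ ≤ √(∫ ω, f ω ^ 4 ∂μ) * √(∫ ω, g ω ^ 4 ∂μ) := by
  have h := integral_mul_le_Lp_mul_Lq_of_nonneg Real.HolderConjugate.two_two
    (.of_forall fun ω => sq_nonneg (f ω)) (.of_forall fun ω => sq_nonneg (g ω))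
    (by simpa using hf.sq_of_four) (by simpa using hg.sq_of_four)
  simp only [Real.rpow_two, ← pow_mul] at h
  simpa only [Real.sqrt_eq_rpow, one_div] using h

lemma integral_sq_mul_sq_le_of_fourth_moment_le {C : ℝ} (hC : 0 ≤ C) (hf : MemLp f 4 μ)
    (hg : MemLp g 4 μ) (hf4 : ∫ ω, f ω ^ 4 ∂μ ≤ C * (∫ ω, f ω ^ 2 ∂μ) ^ 2)
    (hg4 : ∫ ω, g ω ^ 4 ∂μ ≤ C * (∫ ω, g ω ^ 2 ∂μ) ^ 2) :
    ∫ ω, f ω ^ 2 * g ω ^ 2 ∂μ ≤ C * (∫ ω, f ω ^ 2 ∂μ) * ∫ ω, g ω ^ 2 ∂μ := by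
  calc ∫ ω, f ω ^ 2 * g ω ^ 2 ∂μ ≤ √(∫ ω, f ω ^ 4 ∂μ) * √(∫ ω, g ω ^ 4 ∂μ) :=
        integral_sq_mul_sq_le_sqrt_mul_sqrt hf hg
    _ ≤ √(C * (∫ ω, f ω ^ 2 ∂μ) ^ 2) * √(C * (∫ ω, g ω ^ 2 ∂μ) ^ 2) := by gcongr
    _ = C * (∫ ω, f ω ^ 2 ∂μ) * ∫ ω, g ω ^ 2 ∂μ := by
        rw [← Real.sqrt_mul (by positivity)]
        rw [show C * (∫ ω, f ω ^ 2 ∂μ) ^ 2 * (C * (∫ ω, g ω ^ 2 ∂μ) ^ 2)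
          = (C * (∫ ω, f ω ^ 2 ∂μ) * ∫ ω, g ω ^ 2 ∂μ) ^ 2 by ring]
        exact Real.sqrt_sq (by positivity)

lemma integral_sq_le_of_sq_le_sub_sq_mul_sq [IsProbabilityMeasure μ] {A B N G : Ω → ℝ}
    (hind : IndepFun (fun ω => (A ω, B ω)) N μ) (hN0 : ∫ ω, N ω ∂μ = 0)
    (hA : MemLp A 4 μ) (hB : MemLp B 4 μ) (hN : MemLp N 2 μ)
    (hG : ∀ ω, G ω ^ 2 ≤ (A ω - N ω) ^ 2 * B ω ^ 2) :
    ∫ ω, G ω ^ 2 ∂μ ≤ ∫ ω, A ω ^ 2 * B ω ^ 2 ∂μ + (∫ ω, N ω ^ 2 ∂μ) * ∫ ω, B ω ^ 2 ∂μ := by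
  have hB2 : MemLp B 2 μ := hB.mono_exponent (by norm_num)
  have hAB : MemLp (fun ω => A ω * B ω) 2 μ := hB.mul' hA
  have hind_cross : IndepFun N (fun ω => A ω * B ω ^ 2) μ :=
    (hind.comp (measurable_fst.mul (measurable_snd.pow_const 2)) measurable_id).symm
  have hind_noise : IndepFun (fun ω => N ω ^ 2) (fun ω => B ω ^ 2) μ :=
    (hind.comp (measurable_snd.pow_const 2) (measurable_id.pow_const 2)).symm
  have i_signal : Integrable (fun ω => A ω ^ 2 * B ω ^ 2) μ := by
    simpa only [mul_pow] using hAB.integrable_sq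
  have i_AB2 : Integrable (fun ω => A ω * B ω ^ 2) μ :=
    (hAB.integrable_mul hB2).congr (.of_forall fun ω => by simp only [Pi.mul_apply]; ring)
  have i_cross : Integrable (fun ω => N ω * (A ω * B ω ^ 2)) μ :=
    hind_cross.integrable_mul (hN.integrable one_le_two) i_AB2
  have i_noise : Integrable (fun ω => N ω ^ 2 * B ω ^ 2) μ :=
    hind_noise.integrable_mul hN.integrable_sq hB2.integrable_sq
  have h_cross : ∫ ω, N ω * (A ω * B ω ^ 2) ∂μ = 0 := by
    rw [hind_cross.integral_fun_mul_eq_mul_integral hN.aestronglyMeasurable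
      i_AB2.aestronglyMeasurable, hN0, zero_mul]
  have h_noise : ∫ ω, N ω ^ 2 * B ω ^ 2 ∂μ = (∫ ω, N ω ^ 2 ∂μ) * ∫ ω, B ω ^ 2 ∂μ :=
    hind_noise.integral_fun_mul_eq_mul_integral hN.integrable_sq.aestronglyMeasurable
      hB2.integrable_sq.aestronglyMeasurable
  have i_signal_cross :
      Integrable (fun ω => A ω ^ 2 * B ω ^ 2 - 2 * (N ω * (A ω * B ω ^ 2))) μ :=
    i_signal.sub (i_cross.const_mul 2)
  calc ∫ ω, G ω ^ 2 ∂μ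
      ≤ ∫ ω, (A ω ^ 2 * B ω ^ 2 - 2 * (N ω * (A ω * B ω ^ 2))) + N ω ^ 2 * B ω ^ 2 ∂μ :=
        integral_mono_of_nonneg (.of_forall fun ω => sq_nonneg _) (i_signal_cross.add i_noise)
          (.of_forall fun ω => (hG ω).trans_eq (by ring))
    _ = ∫ ω, A ω ^ 2 * B ω ^ 2 ∂μ + (∫ ω, N ω ^ 2 ∂μ) * ∫ ω, B ω ^ 2 ∂μ := by
        rw [integral_add i_signal_cross i_noise, integral_sub i_signal (i_cross.const_mul 2),
          integral_const_mul, h_cross, h_noise, mul_zero, sub_zero]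

end Moments

theorem stmt18_general {Ω : Type*} [MeasureSpace Ω] [IsProbabilityMeasure (ℙ : Measure Ω)]
    {d : ℕ} (X : Ω → EuclideanSpace ℝ (Fin d)) (N : Ω → ℝ)
    (hindep : IndepFun X N ℙ)
    (hNmean : (∫ ω, N ω) = 0)
    (σ : ℝ)
    (hN2 : MemLp N 2 ℙ) (hNvar : (∫ ω, (N ω) ^ 2) ≤ σ ^ 2)
    (C : ℝ) (hC : 1 ≤ C)
    (hX4 : MemLp X 4 ℙ)
    (hhc : ∀ u : EuclideanSpace ℝ (Fin d),
      (∫ ω, ⟪X ω, u⟫ ^ 4) ≤ C * (∫ ω, ⟪X ω, u⟫ ^ 2) ^ 2)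
    (hsec : ∀ u : EuclideanSpace ℝ (Fin d), ‖u‖ = 1 → (∫ ω, ⟪X ω, u⟫ ^ 2) ≤ 1)
    (wstar : EuclideanSpace ℝ (Fin d)) :
    ∀ (w : EuclideanSpace ℝ (Fin d)) (κ : ℝ), 0 < κ →
      ∀ u : EuclideanSpace ℝ (Fin d), ‖u‖ = 1 →
        (∫ ω, ⟪clipGrad κ w (X ω) (⟪X ω, wstar⟫ + N ω), u⟫ ^ 2) ≤
            σ ^ 2 + C * (∫ ω, ⟪X ω, w - wstar⟫ ^ 2) ∧
          variance (fun ω => ⟪clipGrad κ w (X ω) (⟪X ω, wstar⟫ + N ω), u⟫) ℙ ≤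
            σ ^ 2 + C * (∫ ω, ⟪X ω, w - wstar⟫ ^ 2) := by
  intro w κ hκ u hu
  have hu2 : ∫ ω, ⟪X ω, u⟫ ^ 2 ≤ 1 := hsec u hu
  have hsignal : ∫ ω, ⟪X ω, w - wstar⟫ ^ 2 * ⟪X ω, u⟫ ^ 2 ≤ C * ∫ ω, ⟪X ω, w - wstar⟫ ^ 2 :=
    (integral_sq_mul_sq_le_of_fourth_moment_le (zero_le_one.trans hC) (hX4.inner_const _)
      (hX4.inner_const u) (hhc _) (hhc u)).trans <| mul_le_of_le_one_right
        (mul_nonneg (zero_le_one.trans hC) (integral_nonneg fun ω => sq_nonneg _)) hu2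
  have hnoise : (∫ ω, N ω ^ 2) * ∫ ω, ⟪X ω, u⟫ ^ 2 ≤ σ ^ 2 :=
    (mul_le_of_le_one_right (integral_nonneg fun ω => sq_nonneg _) hu2).trans hNvar
  have hsecond : ∫ ω, ⟪clipGrad κ w (X ω) (⟪X ω, wstar⟫ + N ω), u⟫ ^ 2 ≤
      σ ^ 2 + C * ∫ ω, ⟪X ω, w - wstar⟫ ^ 2 := by
    calc _ ≤ (∫ ω, ⟪X ω, w - wstar⟫ ^ 2 * ⟪X ω, u⟫ ^ 2) +
          (∫ ω, N ω ^ 2) * ∫ ω, ⟪X ω, u⟫ ^ 2 :=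
          integral_sq_le_of_sq_le_sub_sq_mul_sq (N := N)
            (hindep.comp (by fun_prop : Measurable fun x => (⟪x, w - wstar⟫, ⟪x, u⟫)) measurable_id)
            hNmean (hX4.inner_const _) (hX4.inner_const u) hN2 fun ω => by
              rw [inner_sub_right, sub_sub]
              exact inner_clipGrad_sq_le hκ w (X ω) u _
      _ ≤ σ ^ 2 + C * ∫ ω, ⟪X ω, w - wstar⟫ ^ 2 := by linarith
  refine ⟨hsecond, (variance_le_expectation_sq ?_).trans hsecond⟩
  have hφ : Measurable fun p : EuclideanSpace ℝ (Fin d) × ℝ =>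
      ⟪clipGrad κ w p.1 (⟪p.1, wstar⟫ + p.2), u⟫ := by
    simp only [inner_clipGrad]
    fun_prop
  exact (hφ.comp_aemeasurable (hX4.aestronglyMeasurable.aemeasurable.prodMk
    hN2.aestronglyMeasurable.aemeasurable)).aestronglyMeasurable

/-- Under the regression model, for every `w`, every `κ > 0` and every
unit vector `u`, the second moment of the projected clipped gradient satisfies
`E[⟨g(X,Y;w,κ), u⟩²] ≤ σ² + C·E[⟨X, w−w*⟩²]`; in particular its variance obeys the same
bound. -/
theorem stmt18 {Ω : Type*} [MeasureSpace Ω] [IsProbabilityMeasure (ℙ : Measure Ω)]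
    {d : ℕ} (X : Ω → EuclideanSpace ℝ (Fin d)) (N : Ω → ℝ)
    (hXmeas : Measurable X) (hNmeas : Measurable N)
    (hindep : IndepFun X N ℙ)
    (hNmean : (∫ ω, N ω) = 0)
    (σ : ℝ) (hσ : 0 < σ)
    (hN2 : MemLp N 2 ℙ) (hNvar : (∫ ω, (N ω) ^ 2) ≤ σ ^ 2)
    (C : ℝ) (hC : 1 ≤ C)
    (hX4 : MemLp X 4 ℙ)
    (hhc : ∀ u : EuclideanSpace ℝ (Fin d),
      (∫ ω, ⟪X ω, u⟫ ^ 4) ≤ C * (∫ ω, ⟪X ω, u⟫ ^ 2) ^ 2)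
    (hsec : ∀ u : EuclideanSpace ℝ (Fin d), ‖u‖ = 1 → (∫ ω, ⟪X ω, u⟫ ^ 2) ≤ 1)
    (wstar : EuclideanSpace ℝ (Fin d)) :
    ∀ (w : EuclideanSpace ℝ (Fin d)) (κ : ℝ), 0 < κ →
      ∀ u : EuclideanSpace ℝ (Fin d), ‖u‖ = 1 →
        (∫ ω, ⟪clipGrad κ w (X ω) (⟪X ω, wstar⟫ + N ω), u⟫ ^ 2) ≤
            σ ^ 2 + C * (∫ ω, ⟪X ω, w - wstar⟫ ^ 2) ∧
          variance (fun ω => ⟪clipGrad κ w (X ω) (⟪X ω, wstar⟫ + N ω), u⟫) ℙ ≤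
            σ ^ 2 + C * (∫ ω, ⟪X ω, w - wstar⟫ ^ 2) :=
  stmt18_general X N hindep hNmean σ hN2 hNvar C hC hX4 hhc hsec wstar
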